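/- arXiv:math/0409169 — 3 statements merged into one kernel-verified Lean document; each statement's English description precedes it below -/
import Mathlib

section
/- For every ε > 0 there is a continuous function g : [0,1] → [0,1] with g(0) = 0 and g(1) = 1 such that: whenever A is a unital C*-algebra with real rank zero and a ∈ A satisfies ‖a‖ ≤ 1, there exists a projection e ∈ A such that g(a a*) · e = e and ‖e a − a‖ < ε. Here g(a a*) is obtained by applying the continuous functional calculus to the positive element a a*, whose spectrum lies in [0,1]. -/
section Aux
variable {A : Type*} [CStarAlgebra A] [PartialOrder A] [StarOrderedRing A]

lemma aux_one_nonneg : (0 : A) ≤ 1 := by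
  simpa using star_mul_self_nonneg (1 : A)

lemma aux_smul_nonneg {c : ℝ} (hc : 0 ≤ c) {v : A} (hv : 0 ≤ v) : 0 ≤ c • v := by
  have hsa : IsSelfAdjoint v := .of_nonneg hv
  have h1 : cfc (fun t : ℝ => c • t) v = c • v := by
    rw [cfc_smul c (fun t : ℝ => t) v, cfc_id' ℝ v]
  rw [← h1]
  exact cfc_nonneg fun t ht =>
    smul_nonneg hc (spectrum_nonneg_of_nonneg hv ht)

lemma aux_alg_nonneg {r : ℝ} (hr : 0 ≤ r) : (0:A) ≤ algebraMap ℝ A r := by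
  rw [Algebra.algebraMap_eq_smul_one]
  exact aux_smul_nonneg hr aux_one_nonneg

lemma aux_alg_mono {r s : ℝ} (h : r ≤ s) :
    algebraMap ℝ A r ≤ algebraMap ℝ A s := by
  have := aux_alg_nonneg (A := A) (sub_nonneg.mpr h)
  rw [map_sub] at this
  exact sub_nonneg.mp this

lemma aux_proj_norm_le_one {q : A} (h1 : star q = q) (h2 : q * q = q) : ‖q‖ ≤ 1 := by
  have h3 : ‖q‖ * ‖q‖ = ‖q‖ := by
    rw [← CStarRing.norm_star_mul_self (x := q), h1, h2]
  nlinarith [norm_nonneg q]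

end Aux

/-- A projection in a C*-algebra: a self-adjoint idempotent. -/
def IsProjection {A : Type*} [Mul A] [Star A] (p : A) : Prop :=
  star p = p ∧ p * p = p

/-- A unital C*-algebra has real rank zero if the invertible self-adjoint elements are dense
in the self-adjoint elements. -/
def RealRankZero (A : Type*) [NormedRing A] [StarRing A] : Prop :=
  ∀ a : A, IsSelfAdjoint a → ∀ ε : ℝ, 0 < ε →
    ∃ b : A, IsSelfAdjoint b ∧ IsUnit b ∧ ‖a - b‖ < ε

set_option maxHeartbeats 2000000 in
/-- For every `ε > 0` there is a continuous function `g : [0,1] → [0,1]`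
with `g 0 = 0` and `g 1 = 1` such that whenever `A` is a unital C*-algebra with real rank
zero and `a ∈ A` satisfies `‖a‖ ≤ 1`, there exists a projection `e ∈ A` such that
`g (a a*) e = e` and `‖e a − a‖ < ε`, where `g (a a*)` is given by the continuous
functional calculus. -/
theorem exists_cutoff_function_projection (ε : ℝ) (hε : 0 < ε) :
    ∃ g : ℝ → ℝ, ContinuousOn g (Set.Icc 0 1) ∧
      (∀ t ∈ Set.Icc (0 : ℝ) 1, g t ∈ Set.Icc (0 : ℝ) 1) ∧ g 0 = 0 ∧ g 1 = 1 ∧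
      ∀ (A : Type*) [CStarAlgebra A] [PartialOrder A] [StarOrderedRing A],
        RealRankZero A → ∀ a : A, ‖a‖ ≤ 1 →
          ∃ e : A, IsProjection e ∧ cfc g (a * star a) * e = e ∧ ‖e * a - a‖ < ε := by
  classical
  set ε' : ℝ := min ε 1 with hε'def
  have hε'pos : 0 < ε' := lt_min hε one_pos
  have hε'le1 : ε' ≤ 1 := min_le_right _ _
  have hε'leε : ε' ≤ ε := min_le_left _ _
  set δ : ℝ := ε' ^ 2 / 8 with hδdef
  set μ : ℝ := ε' ^ 2 / 16 with hμdef
  have hδpos : 0 < δ := by positivity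
  have hμpos : 0 < μ := by positivity
  have hδle : δ ≤ 1 / 8 := by
    have : ε' ^ 2 ≤ 1 := by nlinarith
    rw [hδdef]; linarith
  have hμle : μ ≤ 1 / 16 := by
    have : ε' ^ 2 ≤ 1 := by nlinarith
    rw [hμdef]; linarith
  set g : ℝ → ℝ := fun t => min (t / δ) 1 with hgdef
  set f : ℝ → ℝ := fun t => min (max ((t - δ) / δ) 0) 1 with hfdef
  set h : ℝ → ℝ := fun t => Real.sqrt (f t) with hhdef
  have hgc : Continuous g := (continuous_id.div_const δ).min continuous_const
  have hfc : Continuous f :=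
    (((continuous_id.sub continuous_const).div_const δ).max continuous_const).min
      continuous_const
  have hhc : Continuous h := Real.continuous_sqrt.comp hfc
  have hf_nonneg : ∀ t, 0 ≤ f t := fun t =>
    le_min (le_max_right _ _) zero_le_one
  have hf_le_one : ∀ t, f t ≤ 1 := fun t => min_le_right _ _
  have hh_sq : ∀ t, h t * h t = f t := fun t => Real.mul_self_sqrt (hf_nonneg t)
  have hh_nonneg : ∀ t, 0 ≤ h t := fun t => Real.sqrt_nonneg _
  have hh_le_one : ∀ t, h t ≤ 1 := fun t => by
    have := Real.sqrt_le_sqrt (hf_le_one t)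
    simpa [hhdef] using this
  have hgh : ∀ t ∈ Set.Icc (0:ℝ) 1, g t * h t = h t := by
    intro t ht
    rcases le_or_gt t δ with h1 | h1
    · have : f t = 0 := by
        have h2 : (t - δ) / δ ≤ 0 := div_nonpos_of_nonpos_of_nonneg (by linarith) hδpos.le
        show ((t - δ) / δ ⊔ 0) ⊓ 1 = 0
        rw [max_eq_right h2]
        exact min_eq_left zero_le_one
      simp [hhdef, this]
    · have : g t = 1 := by
        rw [hgdef]
        have : (1:ℝ) ≤ t / δ := (one_le_div hδpos).mpr h1.le
        simp [min_eq_right this]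
      rw [this, one_mul]
  have hidle : ∀ t ∈ Set.Icc (0:ℝ) 1, t ≤ f t + 2 * δ := by
    intro t ht
    rcases le_or_gt t (2*δ) with h1 | h1
    · have := hf_nonneg t; linarith
    · have : f t = 1 := by
        have h2 : (1:ℝ) ≤ (t - δ) / δ := by
          rw [le_div_iff₀ hδpos]; linarith
        show ((t - δ) / δ ⊔ 0) ⊓ 1 = 1
        rw [max_eq_left (le_trans zero_le_one h2)]
        exact min_eq_right h2
      rw [this]; have := ht.2; linarith
  refine ⟨g, hgc.continuousOn, ?_, ?_, ?_, ?_⟩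
  · intro t ht
    exact ⟨le_min (div_nonneg ht.1 hδpos.le) zero_le_one, min_le_right _ _⟩
  · simp [hgdef]
  · rw [hgdef]
    simp only
    rw [min_eq_right ((one_le_div hδpos).mpr (by linarith))]
  · intro A _ _ _ hRR a ha
    rcases subsingleton_or_nontrivial A with htriv | hnt
    · refine ⟨1, ⟨Subsingleton.elim _ _, Subsingleton.elim _ _⟩, Subsingleton.elim _ _, ?_⟩
      rw [Subsingleton.elim (1 * a - a) 0, norm_zero]
      exact hε
    set x := a * star a with hxdef
    have hx0 : 0 ≤ x := mul_star_self_nonneg a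
    have hx_sa : IsSelfAdjoint x := .of_nonneg hx0
    have hxnorm : ‖x‖ ≤ 1 := by
      rw [hxdef, CStarRing.norm_self_mul_star]
      nlinarith [norm_nonneg a]
    have hspec : ∀ t ∈ spectrum ℝ x, t ∈ Set.Icc (0:ℝ) 1 := by
      intro t ht
      refine ⟨spectrum_nonneg_of_nonneg hx0 ht, ?_⟩
      have h1 := spectrum.norm_le_norm_of_mem ht
      calc t ≤ |t| := le_abs_self t
        _ = ‖t‖ := (Real.norm_eq_abs t).symm
        _ ≤ 1 := le_trans h1 hxnorm
    obtain ⟨s, hsdef⟩ : ∃ u : A, u = cfc h x := ⟨_, rfl⟩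
    have hs_sa : IsSelfAdjoint s := by rw [hsdef]; exact cfc_predicate h x
    have hs0 : (0:A) ≤ s := by rw [hsdef]; exact cfc_nonneg fun t _ => hh_nonneg t
    obtain ⟨y, hydef⟩ : ∃ u : A, u = s * s := ⟨_, rfl⟩
    have hy_eq : y = cfc (fun t => h t * h t) x := by
      rw [hydef, hsdef, ← cfc_mul h h x hhc.continuousOn hhc.continuousOn]
    have hy0 : (0:A) ≤ y := by
      rw [hydef]
      have := star_mul_self_nonneg s
      rwa [hs_sa.star_eq] at this
    have hy_sa : IsSelfAdjoint y := .of_nonneg hy0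
    have hgx_s : cfc g x * s = s := by
      rw [hsdef, ← cfc_mul g h x hgc.continuousOn hhc.continuousOn]
      exact cfc_congr fun t ht => hgh t (hspec t ht)
    have hxy : x ≤ y + algebraMap ℝ A (2*δ) := by
      have h1 : cfc (fun t => h t * h t + 2*δ) x = y + algebraMap ℝ A (2*δ) := by
        rw [cfc_add (a := x) (f := fun t => h t * h t) (g := fun _ => 2*δ)
          (by fun_prop) (by fun_prop), cfc_const (2*δ) x hx_sa, ← hy_eq]
      have h2 : cfc (fun t : ℝ => t) x ≤ cfc (fun t => h t * h t + 2*δ) x := by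
        refine cfc_mono (fun t ht => ?_) (by fun_prop) (by fun_prop)
        rw [hh_sq t]
        exact hidle t (hspec t ht)
      rwa [cfc_id' ℝ x hx_sa, h1] at h2
    -- real rank zero approximation
    have halg_sa : IsSelfAdjoint (algebraMap ℝ A μ) := by
      rw [Algebra.algebraMap_eq_smul_one]
      exact IsSelfAdjoint.smul (star_trivial μ) (IsSelfAdjoint.one (R := A))
    have hyμ_sa : IsSelfAdjoint (y - algebraMap ℝ A μ) := hy_sa.sub halg_sa
    obtain ⟨b, hb_sa, hb_unit, hb_norm⟩ := hRR (y - algebraMap ℝ A μ) hyμ_sa (μ/2) (by positivity)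
    have hv_sa : IsSelfAdjoint (y - algebraMap ℝ A μ - b) := hyμ_sa.sub hb_sa
    have hv_le : y - algebraMap ℝ A μ - b ≤ algebraMap ℝ A (μ/2) :=
      le_trans hv_sa.le_algebraMap_norm_self (aux_alg_mono hb_norm.le)
    have hv_ge : -(algebraMap ℝ A (μ/2)) ≤ y - algebraMap ℝ A μ - b := by
      have h1 := hv_sa.neg.le_algebraMap_norm_self
      rw [norm_neg] at h1
      have h2 := le_trans h1 (aux_alg_mono hb_norm.le)
      have := neg_le_neg h2
      rwa [neg_neg] at this
    have hsum : algebraMap ℝ A (μ/2) + algebraMap ℝ A μ = algebraMap ℝ A (3*μ/2) := by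
      rw [← map_add]
      congr 1
      ring
    have hby1 : y ≤ b + algebraMap ℝ A (3*μ/2) := by
      calc y = y - algebraMap ℝ A μ - b + (algebraMap ℝ A μ + b) := by abel
        _ ≤ algebraMap ℝ A (μ/2) + (algebraMap ℝ A μ + b) := add_le_add_left hv_le _
        _ = b + algebraMap ℝ A (3*μ/2) := by rw [← add_assoc, hsum]; abel
    have hby2 : b + algebraMap ℝ A (μ/2) ≤ y := by
      have e1 : algebraMap ℝ A μ = algebraMap ℝ A (μ/2) + algebraMap ℝ A (μ/2) := by
        rw [← map_add]; norm_num
      calc b + algebraMap ℝ A (μ/2) = -(algebraMap ℝ A (μ/2)) + (algebraMap ℝ A μ + b) := by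
            rw [e1]; abel
        _ ≤ y - algebraMap ℝ A μ - b + (algebraMap ℝ A μ + b) := add_le_add_left hv_ge _
        _ = y := by abel
    -- the spectral projection of b
    obtain ⟨φ, hφdef⟩ : ∃ u : ℝ → ℝ, u = fun t => if 0 < t then 1 else 0 := ⟨_, rfl⟩
    have hφc : ContinuousOn φ (spectrum ℝ b) := by
      have hsub : spectrum ℝ b ⊆ {t : ℝ | t ≠ 0} := by
        intro t ht hteq
        exact spectrum.zero_notMem ℝ hb_unit (by rwa [hteq] at ht)
      refine ContinuousOn.mono ?_ hsub
      intro t ht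
      apply ContinuousAt.continuousWithinAt
      rcases (ht : t ≠ 0).lt_or_gt with h1 | h1
      · have hev : φ =ᶠ[nhds t] fun _ => (0:ℝ) := by
          filter_upwards [Iio_mem_nhds h1] with u hu
          simp [hφdef, not_lt.mpr (Set.mem_Iio.mp hu).le]
        exact (continuousAt_congr hev).mpr continuousAt_const
      · have hev : φ =ᶠ[nhds t] fun _ => (1:ℝ) := by
          filter_upwards [Ioi_mem_nhds h1] with u hu
          simp [hφdef, Set.mem_Ioi.mp hu]
        exact (continuousAt_congr hev).mpr continuousAt_const
    obtain ⟨p, hpdef⟩ : ∃ u : A, u = cfc φ b := ⟨_, rfl⟩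
    have hp_sa : IsSelfAdjoint p := by rw [hpdef]; exact cfc_predicate φ b
    have hp_star : star p = p := hp_sa.star_eq
    have hp_idem : p * p = p := by
      rw [hpdef, ← cfc_mul φ φ b hφc hφc]
      exact cfc_congr fun t _ => by by_cases h0 : 0 < t <;> simp [hφdef, h0]
    have hp0 : (0:A) ≤ p := by
      rw [hpdef]
      exact cfc_nonneg fun t _ => by by_cases h0 : 0 < t <;> simp [hφdef, h0]
    have hp_le1 : p ≤ 1 := by
      rw [hpdef]
      exact cfc_le_one φ b fun t _ => by by_cases h0 : 0 < t <;> simp [hφdef, h0]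
    have h1p0 : (0:A) ≤ 1 - p := sub_nonneg.mpr hp_le1
    have h1p_star : star (1 - p) = 1 - p := by rw [star_sub, star_one, hp_star]
    have h1p_idem : (1 - p) * (1 - p) = 1 - p := by
      rw [mul_sub, mul_one, sub_mul, one_mul, hp_idem]; abel
    have hpbp : (0:A) ≤ p * b * p := by
      have e : cfc (fun t => φ t * t * φ t) b = p * b * p := by
        rw [cfc_mul (fun t => φ t * t) φ b (hφc.mul (by fun_prop)) hφc,
          cfc_mul φ (fun t : ℝ => t) b hφc (by fun_prop), cfc_id' ℝ b hb_sa, ← hpdef]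
      rw [← e]
      refine cfc_nonneg fun t _ => ?_
      by_cases h0 : 0 < t
      · simp [hφdef, h0, h0.le]
      · simp [hφdef, h0]
    have h1pb : (1 - p) * b * (1 - p) ≤ 0 := by
      have e0 : cfc (fun t => 1 - φ t) b = 1 - p := by
        rw [cfc_sub (a := b) (f := fun _ => (1:ℝ)) (g := φ) (by fun_prop) hφc,
          cfc_const 1 b hb_sa, map_one, ← hpdef]
      have e : cfc (fun t => (1 - φ t) * t * (1 - φ t)) b = (1 - p) * b * (1 - p) := by
        rw [cfc_mul (fun t => (1 - φ t) * t) (fun t => 1 - φ t) b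
            (((continuousOn_const (c := (1:ℝ))).sub hφc).mul (by fun_prop))
            ((continuousOn_const (c := (1:ℝ))).sub hφc),
          cfc_mul (fun t => 1 - φ t) (fun t : ℝ => t) b
            ((continuousOn_const (c := (1:ℝ))).sub hφc) (by fun_prop),
          cfc_id' ℝ b hb_sa, e0]
      rw [← e]
      refine cfc_nonpos _ b fun t _ => ?_
      by_cases h0 : 0 < t
      · simp [hφdef, h0]
      · push_neg at h0
        simp [hφdef, not_lt.mpr h0, h0]
    -- the corner inverse
    obtain ⟨z, hzdef⟩ : ∃ u : A, u = p * y * p := ⟨_, rfl⟩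
    have hz_low : algebraMap ℝ A (μ/2) * p ≤ z := by
      have hc := star_left_conjugate_le_conjugate hby2 p
      rw [hp_star] at hc
      have e : p * (b + algebraMap ℝ A (μ/2)) * p = p * b * p + algebraMap ℝ A (μ/2) * p := by
        rw [mul_add, add_mul]
        congr 1
        rw [← Algebra.commutes ((μ:ℝ)/2) p, mul_assoc, hp_idem]
      rw [e, ← hzdef] at hc
      calc algebraMap ℝ A (μ/2) * p ≤ p * b * p + algebraMap ℝ A (μ/2) * p :=
            le_add_of_nonneg_left hpbp
        _ ≤ z := hc
    obtain ⟨T, hTdef⟩ : ∃ u : A, u = z + (1 - p) := ⟨_, rfl⟩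
    have hz_star : star z = z := by
      rw [hzdef, star_mul, star_mul, hp_star, hy_sa.star_eq, mul_assoc]
    have hT_sa : IsSelfAdjoint T := by
      rw [IsSelfAdjoint, hTdef, star_add, hz_star, h1p_star]
    have hT_ge : algebraMap ℝ A (μ/2) ≤ T := by
      have h1 : algebraMap ℝ A (μ/2) * (1 - p) ≤ 1 - p := by
        have h2 : (1 - p) - algebraMap ℝ A (μ/2) * (1 - p) = (1 - μ/2) • (1 - p) := by
          rw [sub_smul, one_smul, Algebra.smul_def]
        have h3 : (0:A) ≤ (1 - μ/2) • (1 - p) := aux_smul_nonneg (by linarith) h1p0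
        rw [← h2] at h3
        exact sub_nonneg.mp h3
      calc algebraMap ℝ A (μ/2)
          = algebraMap ℝ A (μ/2) * p + algebraMap ℝ A (μ/2) * (1 - p) := by
            rw [← mul_add]; simp
        _ ≤ z + (1 - p) := add_le_add hz_low h1
        _ = T := hTdef.symm
    have hT_unit : IsUnit T :=
      CStarAlgebra.isUnit_of_le _ hT_ge
        ((IsUnit.map (algebraMap ℝ A) (isUnit_iff_ne_zero.mpr (by positivity))).unit.isStrictlyPositive_of_le
        (aux_alg_nonneg (by positivity)))
    obtain ⟨W, hWdef⟩ : ∃ u : A, u = ↑hT_unit.unit⁻¹ := ⟨_, rfl⟩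
    have hWT : W * T = 1 := by rw [hWdef]; exact hT_unit.val_inv_mul
    have hTW : T * W = 1 := by rw [hWdef]; exact hT_unit.mul_val_inv
    have hpz : p * z = z := by
      rw [hzdef, ← mul_assoc, ← mul_assoc, hp_idem]
    have hzp : z * p = z := by
      rw [hzdef, mul_assoc (p * y) p p, hp_idem]
    have hpT : p * T = z := by
      rw [hTdef, mul_add, hpz, mul_sub, mul_one, hp_idem, sub_self, add_zero]
    have hTp : T * p = z := by
      rw [hTdef, add_mul, hzp, sub_mul, one_mul, hp_idem, sub_self, add_zero]
    have h1pT : T * (1 - p) = 1 - p := by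
      rw [hTdef, add_mul, h1p_idem, mul_sub, mul_one, hzp, sub_self, zero_add]
    have hT1p : (1 - p) * T = 1 - p := by
      rw [hTdef, mul_add, h1p_idem, sub_mul, one_mul, hpz, sub_self, zero_add]
    have hW1p : W * (1 - p) = 1 - p := by
      calc W * (1 - p) = W * (T * (1 - p)) := by rw [h1pT]
        _ = (W * T) * (1 - p) := (mul_assoc _ _ _).symm
        _ = 1 - p := by rw [hWT, one_mul]
    have h1pW : (1 - p) * W = 1 - p := by
      calc (1 - p) * W = ((1 - p) * T) * W := by rw [hT1p]
        _ = (1 - p) * (T * W) := mul_assoc _ _ _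
        _ = 1 - p := by rw [hTW, mul_one]
    have hzT : z = T - (1 - p) := by rw [hTdef]; abel
    have hWz : W * z = p := by
      rw [hzT, mul_sub, hWT, hW1p, sub_sub_cancel]
    have hzW : z * W = p := by
      rw [hzT, sub_mul, hTW, h1pW, sub_sub_cancel]
    have hpW : p * W = W * p := by
      calc p * W = (W * T) * (p * W) := by rw [hWT, one_mul]
        _ = W * (T * p) * W := by simp only [mul_assoc]
        _ = W * (p * T) * W := by rw [hTp, hpT]
        _ = (W * p) * (T * W) := by simp only [mul_assoc]
        _ = W * p := by rw [hTW, mul_one]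
    have hW_star : star W = W := by
      have h1 : star W * T = 1 := by
        have h2 := congrArg star hTW
        rwa [star_mul, hT_sa.star_eq, star_one] at h2
      calc star W = star W * (T * W) := by rw [hTW, mul_one]
        _ = (star W * T) * W := (mul_assoc _ _ _).symm
        _ = W := by rw [h1, one_mul]
    obtain ⟨w, hwdef⟩ : ∃ u : A, u = p * W := ⟨_, rfl⟩
    have hwp_eq : w = W * p := by rw [hwdef, hpW]
    have hw_star : star w = w := by
      rw [hwdef, star_mul, hW_star, hp_star]; exact hpW.symm
    have hwp : w * p = w := by
      rw [hwp_eq, mul_assoc, hp_idem, ← hwp_eq]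
    have hpw : p * w = w := by rw [hwdef, ← mul_assoc, hp_idem]
    have hwz : w * z = p := by rw [hwdef, mul_assoc, hWz, hp_idem]
    have hzw : z * w = p := by rw [hwp_eq, ← mul_assoc, hzW, hp_idem]
    -- the projection e := q
    obtain ⟨q, hqdef⟩ : ∃ u : A, u = s * w * s := ⟨_, rfl⟩
    have hq_star : star q = q := by
      rw [hqdef, star_mul, star_mul, hw_star, hs_sa.star_eq, mul_assoc]
    have hwyp : w * (y * p) = p := by
      calc w * (y * p) = (w * p) * (y * p) := by rw [hwp]
        _ = w * (p * y * p) := by simp only [mul_assoc]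
        _ = w * z := by rw [← hzdef]
        _ = p := hwz
    have hwyw : w * (y * w) = w := by
      calc w * (y * w) = w * (y * (p * w)) := by rw [hpw]
        _ = (w * (y * p)) * w := by simp only [mul_assoc]
        _ = p * w := by rw [hwyp]
        _ = w := hpw
    have hq_idem : q * q = q := by
      have e1 : q * q = s * (w * (y * (w * s))) := by
        rw [hqdef, hydef]; simp only [mul_assoc]
      have e2 : w * (y * (w * s)) = w * s := by
        rw [← mul_assoc y w s, ← mul_assoc w (y*w) s, hwyw]
      rw [e1, e2, ← mul_assoc, ← hqdef]
    have hqsp : q * (s * p) = s * p := by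
      calc q * (s * p) = s * (w * ((s * s) * p)) := by rw [hqdef]; simp only [mul_assoc]
        _ = s * (w * (y * p)) := by rw [← hydef]
        _ = s * p := by rw [hwyp]
    have hq_norm : ‖q‖ ≤ 1 := aux_proj_norm_le_one hq_star hq_idem
    have h1q_star : star (1 - q) = 1 - q := by rw [star_sub, star_one, hq_star]
    have h1q_idem : (1 - q) * (1 - q) = 1 - q := by
      rw [mul_sub, mul_one, sub_mul, one_mul, hq_idem]; abel
    have h1q_norm : ‖1 - q‖ ≤ 1 := aux_proj_norm_le_one h1q_star h1q_idem
    have hgxq : cfc g x * q = q := by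
      calc cfc g x * q = (cfc g x * s) * (w * s) := by rw [hqdef]; simp only [mul_assoc]
        _ = s * (w * s) := by rw [hgx_s]
        _ = q := by rw [hqdef, mul_assoc]
    -- norm estimates
    have h1py_0 : (0:A) ≤ (1 - p) * y * (1 - p) := by
      have := star_left_conjugate_nonneg hy0 (1 - p)
      rwa [h1p_star] at this
    have h1py_le : (1 - p) * y * (1 - p) ≤ algebraMap ℝ A (3*μ/2) := by
      have hc := star_left_conjugate_le_conjugate hby1 (1 - p)
      rw [h1p_star] at hc
      have e : (1 - p) * (b + algebraMap ℝ A (3*μ/2)) * (1 - p)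
          = (1 - p) * b * (1 - p) + algebraMap ℝ A (3*μ/2) * (1 - p) := by
        rw [mul_add, add_mul]
        congr 1
        rw [← Algebra.commutes (3*(μ:ℝ)/2) (1 - p), mul_assoc, h1p_idem]
      rw [e] at hc
      have h2 : algebraMap ℝ A (3*μ/2) * (1 - p) ≤ algebraMap ℝ A (3*μ/2) := by
        have h3 : algebraMap ℝ A (3*μ/2) - algebraMap ℝ A (3*μ/2) * (1 - p) = (3*μ/2) • p := by
          rw [Algebra.smul_def, mul_sub, mul_one]; abel
        have h4 : (0:A) ≤ (3*μ/2) • p := aux_smul_nonneg (by positivity) hp0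
        rw [← h3] at h4
        exact sub_nonneg.mp h4
      calc (1 - p) * y * (1 - p)
          ≤ (1 - p) * b * (1 - p) + algebraMap ℝ A (3*μ/2) * (1 - p) := hc
        _ ≤ 0 + algebraMap ℝ A (3*μ/2) * (1 - p) := add_le_add_left h1pb _
        _ = algebraMap ℝ A (3*μ/2) * (1 - p) := zero_add _
        _ ≤ algebraMap ℝ A (3*μ/2) := h2
    have hs1p_sq : ‖s * (1 - p)‖ * ‖s * (1 - p)‖ ≤ 3*μ/2 := by
      have e : star (s * (1 - p)) * (s * (1 - p)) = (1 - p) * y * (1 - p) := by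
        rw [star_mul, h1p_star, hs_sa.star_eq, hydef]; simp only [mul_assoc]
      have hn := CStarRing.norm_star_mul_self (x := s * (1 - p))
      rw [e] at hn
      rw [← hn]
      calc ‖(1 - p) * y * (1 - p)‖ ≤ ‖algebraMap ℝ A (3*μ/2)‖ :=
            CStarAlgebra.norm_le_norm_of_nonneg_of_le h1py_0 h1py_le
        _ = 3*μ/2 := by rw [norm_algebraMap', Real.norm_of_nonneg (by positivity)]
    have h1qs : (1 - q) * s = (1 - q) * (s * (1 - p)) := by
      have h0 : (1 - q) * (s * p) = 0 := by
        rw [sub_mul, one_mul, hqsp, sub_self]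
      calc (1 - q) * s = (1 - q) * (s * p) + (1 - q) * (s * (1 - p)) := by
            rw [← mul_add]
            congr 1
            rw [mul_sub, mul_one]; abel
        _ = (1 - q) * (s * (1 - p)) := by rw [h0, zero_add]
    have h1qs_norm : ‖(1 - q) * s‖ ≤ ‖s * (1 - p)‖ := by
      rw [h1qs]
      calc ‖(1 - q) * (s * (1 - p))‖ ≤ ‖1 - q‖ * ‖s * (1 - p)‖ := norm_mul_le _ _
        _ ≤ 1 * ‖s * (1 - p)‖ := mul_le_mul_of_nonneg_right h1q_norm (norm_nonneg _)
        _ = ‖s * (1 - p)‖ := one_mul _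
    have h1qy : ‖(1 - q) * y * (1 - q)‖ ≤ 3*μ/2 := by
      have e : ((1 - q) * s) * star ((1 - q) * s) = (1 - q) * y * (1 - q) := by
        rw [star_mul, hs_sa.star_eq, h1q_star, hydef]; simp only [mul_assoc]
      have hn := CStarRing.norm_self_mul_star (x := (1 - q) * s)
      rw [e] at hn
      rw [hn]
      calc ‖(1 - q) * s‖ * ‖(1 - q) * s‖ ≤ ‖s * (1 - p)‖ * ‖s * (1 - p)‖ :=
            mul_le_mul h1qs_norm h1qs_norm (norm_nonneg _) (norm_nonneg _)
        _ ≤ 3*μ/2 := hs1p_sq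
    have h1qx : ‖(1 - q) * x * (1 - q)‖ ≤ 3*μ/2 + 2*δ := by
      have hc := star_left_conjugate_le_conjugate hxy (1 - q)
      rw [h1q_star] at hc
      have e : (1 - q) * (y + algebraMap ℝ A (2*δ)) * (1 - q)
          = (1 - q) * y * (1 - q) + algebraMap ℝ A (2*δ) * (1 - q) := by
        rw [mul_add, add_mul]
        congr 1
        rw [← Algebra.commutes (2*(δ:ℝ)) (1 - q), mul_assoc, h1q_idem]
      rw [e] at hc
      have h0 : (0:A) ≤ (1 - q) * x * (1 - q) := by
        have := star_left_conjugate_nonneg hx0 (1 - q)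
        rwa [h1q_star] at this
      calc ‖(1 - q) * x * (1 - q)‖
          ≤ ‖(1 - q) * y * (1 - q) + algebraMap ℝ A (2*δ) * (1 - q)‖ :=
            CStarAlgebra.norm_le_norm_of_nonneg_of_le h0 hc
        _ ≤ ‖(1 - q) * y * (1 - q)‖ + ‖algebraMap ℝ A (2*δ) * (1 - q)‖ := norm_add_le _ _
        _ ≤ 3*μ/2 + 2*δ := by
            refine add_le_add h1qy ?_
            calc ‖algebraMap ℝ A (2*δ) * (1 - q)‖
                ≤ ‖algebraMap ℝ A (2*δ)‖ * ‖1 - q‖ := norm_mul_le _ _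
              _ ≤ (2*δ) * 1 := by
                  rw [norm_algebraMap', Real.norm_of_nonneg (by positivity)]
                  exact mul_le_mul_of_nonneg_left h1q_norm (by positivity)
              _ = 2*δ := mul_one _
    have hfinal : ‖q * a - a‖ < ε := by
      have e1 : q * a - a = -((1 - q) * a) := by
        rw [sub_mul, one_mul, neg_sub]
      have e2 : ‖q * a - a‖ = ‖(1 - q) * a‖ := by rw [e1, norm_neg]
      have e3 : ((1 - q) * a) * star ((1 - q) * a) = (1 - q) * x * (1 - q) := by
        rw [star_mul, h1q_star, hxdef]; simp only [mul_assoc]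
      have hn := CStarRing.norm_self_mul_star (x := (1 - q) * a)
      rw [e3] at hn
      have h4 : ‖(1 - q) * a‖ * ‖(1 - q) * a‖ ≤ 3*μ/2 + 2*δ := by rw [← hn]; exact h1qx
      have h5 : 3*μ/2 + 2*δ = (11/32) * ε'^2 := by rw [hμdef, hδdef]; ring
      have h6 : (0:ℝ) ≤ ‖(1 - q) * a‖ := norm_nonneg _
      rw [e2]
      nlinarith [hε'pos, hε'leε, sq_nonneg ε']
    exact ⟨q, ⟨hq_star, hq_idem⟩, hgxq, hfinal⟩
end

section
/- Let g : [0,1] → [0,1] be a continuous function with g(0) = g(1) = 0, and let ε > 0. Then there exists δ > 0 such that whenever A is a unital C*-algebra, ω is a state on A, and a ∈ A satisfies 0 ≤ a ≤ 1 and ω(a − a²) < δ, then ω(g(a)) < ε. Here g(a) is obtained by continuous functional calculus, and ω(a − a²), ω(g(a)) are nonnegative real numbers since a − a² and g(a) are positive. -/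
/-!
Since `g` vanishes at `0` and `1` and is bounded on `[0, 1]`, for every `ε > 0` there is a
`C > 0` with `g t ≤ ε / 2 + C (t - t²)` on `[0, 1]`. The spectrum of `a` lies in `[0, 1]`, so
functional calculus turns this into `g(a) ≤ ε / 2 + C (a - a²)`, and applying the positive,
unital functional `ω` gives `ω(g(a)) ≤ ε / 2 + C ω(a - a²) < ε` once `δ = ε / (2C)`.
-/

open ComplexOrder Set

theorem exists_le_add_mul_sub_sq {g : ℝ → ℝ} (hg : ContinuousOn g (Icc 0 1)) (hg0 : g 0 = 0)
    (hg1 : g 1 = 0) {ε : ℝ} (hε : 0 < ε) :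
    ∃ C > 0, ∀ t ∈ Icc (0 : ℝ) 1, g t ≤ ε + C * (t - t ^ 2) := by
  obtain ⟨M, hM⟩ := isCompact_Icc.bddAbove_image hg
  obtain ⟨η₀, hη₀, h₀⟩ :=
    Metric.continuousWithinAt_iff.mp (hg 0 (left_mem_Icc.mpr zero_le_one)) ε hε
  obtain ⟨η₁, hη₁, h₁⟩ :=
    Metric.continuousWithinAt_iff.mp (hg 1 (right_mem_Icc.mpr zero_le_one)) ε hε
  set η := min η₀ η₁
  have hη : 0 < η := lt_min hη₀ hη₁
  refine ⟨(|M| + 1) / η ^ 2, by positivity, fun t ht => ?_⟩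
  have hrest : 0 ≤ (|M| + 1) / η ^ 2 * (t - t ^ 2) := by
    have : 0 ≤ t - t ^ 2 := by nlinarith [ht.1, ht.2]
    positivity
  rcases lt_or_ge t η with hnear₀ | hfar₀
  · have hgt := h₀ ht <| by
      rw [Real.dist_0_eq_abs, abs_of_nonneg ht.1]; exact hnear₀.trans_le (min_le_left _ _)
    rw [hg0, Real.dist_0_eq_abs] at hgt
    linarith [le_abs_self (g t)]
  rcases lt_or_ge (1 - η) t with hnear₁ | hfar₁
  · have hgt := h₁ ht <| by
      rw [Real.dist_eq, abs_of_nonpos (by linarith [ht.2])]; linarith [min_le_right η₀ η₁]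
    rw [hg1, Real.dist_0_eq_abs] at hgt
    linarith [le_abs_self (g t)]
  have hmid : η ^ 2 ≤ t - t ^ 2 := by
    nlinarith [mul_le_mul hfar₀ (by linarith : η ≤ 1 - t) hη.le ht.1]
  calc g t ≤ |M| + 1 := by linarith [hM ⟨t, ht, rfl⟩, le_abs_self M]
    _ = (|M| + 1) / η ^ 2 * η ^ 2 := by field_simp
    _ ≤ (|M| + 1) / η ^ 2 * (t - t ^ 2) := by gcongr
    _ ≤ ε + (|M| + 1) / η ^ 2 * (t - t ^ 2) := by linarith

section

variable {A : Type*} [CStarAlgebra A]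

theorem LinearMap.map_algebraMap_real_of_map_one {ω : A →ₗ[ℂ] ℂ} (hω : ω 1 = 1)
    (r : ℝ) : ω (algebraMap ℝ A r) = r := by
  rw [Algebra.algebraMap_eq_smul_one, ω.map_smul_of_tower, hω, Complex.real_smul, mul_one]

variable [PartialOrder A] [StarOrderedRing A]

theorem spectrum_subset_Icc_of_nonneg_of_le_one {a : A} (ha₀ : 0 ≤ a) (ha₁ : a ≤ 1) :
    spectrum ℝ a ⊆ Icc 0 1 :=
  fun _ hx => ⟨spectrum_nonneg_of_nonneg ha₀ hx, (CFC.le_one_iff a).mp ha₁ _ hx⟩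

theorem cfc_le_algebraMap_add_smul_sub_sq {g : ℝ → ℝ} (hg : ContinuousOn g (Icc 0 1))
    {ε C : ℝ} (hbound : ∀ t ∈ Icc (0 : ℝ) 1, g t ≤ ε + C * (t - t ^ 2))
    {a : A} (ha₀ : 0 ≤ a) (ha₁ : a ≤ 1) :
    cfc g a ≤ algebraMap ℝ A ε + C • (a - a ^ 2) := by
  have hspec := spectrum_subset_Icc_of_nonneg_of_le_one ha₀ ha₁
  calc cfc g a ≤ cfc (fun t : ℝ => ε + C * (t - t ^ 2)) a :=
        cfc_mono (fun t ht => hbound t (hspec ht)) (hg.mono hspec)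
    _ = algebraMap ℝ A ε + C • (a - a ^ 2) := by
      rw [cfc_const_add _ _ a, cfc_const_mul _ _ a, cfc_sub _ _ a, cfc_id' ℝ a, cfc_pow_id a 2]

end

theorem state_small_of_almost_projection_general (g : ℝ → ℝ) (hg : ContinuousOn g (Set.Icc 0 1))
    (hg0 : g 0 = 0) (hg1 : g 1 = 0) (ε : ℝ) (hε : 0 < ε) :
    ∃ δ > (0 : ℝ), ∀ (A : Type*) [CStarAlgebra A] [PartialOrder A] [StarOrderedRing A]
      (ω : A →ₗ[ℂ] ℂ), ω 1 = 1 → (∀ a : A, 0 ≤ a → 0 ≤ ω a) →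
      ∀ a : A, 0 ≤ a → a ≤ 1 → ω (a - a ^ 2) < (δ : ℂ) → ω (cfc g a) < (ε : ℂ) := by
  obtain ⟨C, hC, hbound⟩ := exists_le_add_mul_sub_sq hg hg0 hg1 (half_pos hε)
  refine ⟨ε / 2 / C, by positivity, fun A _ _ _ ω hω₁ hω a ha₀ ha₁ hδ => ?_⟩
  have hle : ω (cfc g a) ≤ ω (algebraMap ℝ A (ε / 2) + C • (a - a ^ 2)) :=
    (PositiveLinearMap.mk₀ ω hω).monotone <|
      cfc_le_algebraMap_add_smul_sub_sq hg hbound ha₀ ha₁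
  rw [map_add, ω.map_smul_of_tower, ω.map_algebraMap_real_of_map_one hω₁,
    Complex.real_smul] at hle
  calc ω (cfc g a) ≤ ((ε / 2 : ℝ) : ℂ) + C * ω (a - a ^ 2) := hle
    _ < ((ε / 2 : ℝ) : ℂ) + C * ((ε / 2 / C : ℝ) : ℂ) := by gcongr
    _ = ε := by norm_cast; field_simp; ring

/-- Let `g : [0,1] → [0,1]` be continuous with `g 0 = g 1 = 0`, and let
`ε > 0`.  Then there is `δ > 0` such that whenever `ω` is a state on a unital C*-algebra `A`
and `a ∈ A` satisfies `0 ≤ a ≤ 1` and `ω (a − a²) < δ`, then `ω (g a) < ε`, where `g a` is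
given by the continuous functional calculus. -/
theorem state_small_of_almost_projection (g : ℝ → ℝ) (hg : ContinuousOn g (Set.Icc 0 1))
    (hg01 : ∀ t ∈ Set.Icc (0 : ℝ) 1, g t ∈ Set.Icc (0 : ℝ) 1)
    (hg0 : g 0 = 0) (hg1 : g 1 = 0) (ε : ℝ) (hε : 0 < ε) :
    ∃ δ > (0 : ℝ), ∀ (A : Type*) [CStarAlgebra A] [PartialOrder A] [StarOrderedRing A]
      (ω : A →ₗ[ℂ] ℂ), ω 1 = 1 → (∀ a : A, 0 ≤ a → 0 ≤ ω a) →
      ∀ a : A, 0 ≤ a → a ≤ 1 → ω (a - a ^ 2) < (δ : ℂ) → ω (cfc g a) < (ε : ℂ) :=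
  state_small_of_almost_projection_general g hg hg0 hg1 ε hε
end

section
/- Let A be a unital C*-algebra, let θ, γ ∈ ℝ, let d, k, l ∈ ℤ, and let u, v ∈ A be unitaries satisfying v u = e^{2πiθ} u v. Let f : ℂ → ℝ be continuous, and for a continuous function φ : ℂ → ℝ write exp(2πi φ(u)) for the unitary obtained by applying the continuous functional calculus of the normal element u to the function z ↦ e^{2πi φ(z)}. Define g : ℂ → ℝ by g(z) = f(e^{2πilθ} z) + (ld − k)θ. Then, with w = u^k v^l: (1) w (e^{2πiγ} u) w* = e^{2πi(γ + lθ)} u; and (2) w (exp(2πi f(u)) u^d v) w* = exp(2πi g(u)) u^d v. -/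
/-- The complex number `e^{2πit}` for `t : ℝ`. -/
noncomputable def e2πi (t : ℝ) : ℂ :=
  Complex.exp ((2 * Real.pi * t : ℝ) * Complex.I)

lemma e2πi_add (s t : ℝ) : e2πi (s + t) = e2πi s * e2πi t := by
  rw [e2πi, e2πi, e2πi, ← Complex.exp_add]
  congr 1
  push_cast
  ring

lemma e2πi_zero : e2πi 0 = 1 := by simp [e2πi]

lemma e2πi_neg_mul (t : ℝ) : e2πi (-t) * e2πi t = 1 := by
  rw [← e2πi_add]; simp [e2πi_zero]

lemma e2πi_congr {s t : ℝ} (h : s = t) : e2πi s = e2πi t := by rw [h]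

lemma smul_flip17 {A : Type*} [CStarAlgebra A] {t : ℝ} {a b : A}
    (h : a = e2πi t • b) : b = e2πi (-t) • a := by
  rw [h, smul_smul, e2πi_neg_mul, one_smul]

lemma e2πi_continuous (f : ℂ → ℝ) (hf : Continuous f) :
    Continuous fun z : ℂ => e2πi (f z) := by
  unfold e2πi
  fun_prop

lemma mul_zpow_comm17 {A : Type*} [CStarAlgebra A] (x : A) (y : unitary A) (t : ℝ)
    (h : x * (y : A) = e2πi t • ((y : A) * x)) (n : ℤ) :
    x * ((y ^ n : unitary A) : A) = e2πi (n * t) • (((y ^ n : unitary A) : A) * x) := by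
  have h1 : star ((y : unitary A) : A) * (y : A) = 1 := Unitary.coe_star_mul_self y
  have h2 : (y : A) * star ((y : unitary A) : A) = 1 := Unitary.coe_mul_star_self y
  have hYi : ((y⁻¹ : unitary A) : A) = star (y : A) := rfl
  have h1' : ∀ z : A, star (y : A) * ((y : A) * z) = z := fun z => by
    rw [← mul_assoc, h1, one_mul]
  have h2' : ∀ z : A, (y : A) * (star (y : A) * z) = z := fun z => by
    rw [← mul_assoc, h2, one_mul]
  have key : star (y : A) * x = e2πi t • (x * star (y : A)) := by
    have := congrArg (fun z => star (y : A) * z * star (y : A)) h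
    simpa [mul_assoc, h1, h2, h1', h2', mul_smul_comm, smul_mul_assoc] using this
  have hinv : x * ((y⁻¹ : unitary A) : A) = e2πi (-t) • (((y⁻¹ : unitary A) : A) * x) := by
    rw [hYi]; exact smul_flip17 key
  induction n using Int.induction_on with
  | zero => simp [e2πi_zero]
  | succ i ih =>
    have hz : (y ^ ((i : ℤ) + 1) : unitary A) = y ^ (i : ℤ) * y := zpow_add_one y i
    rw [hz, MulMemClass.coe_mul, ← mul_assoc, ih, smul_mul_assoc, mul_assoc, h,
      mul_smul_comm, smul_smul, ← e2πi_add, ← mul_assoc]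
    exact congrArg (fun c => c • _) (e2πi_congr (by push_cast; ring))
  | pred i ih =>
    have hz : (y ^ (-(i : ℤ) - 1) : unitary A) = y ^ (-(i : ℤ)) * y⁻¹ := zpow_sub_one y _
    rw [hz, MulMemClass.coe_mul, ← mul_assoc, ih, smul_mul_assoc, mul_assoc, hinv,
      mul_smul_comm, smul_smul, ← e2πi_add, ← mul_assoc]
    exact congrArg (fun c => c • _) (e2πi_congr (by push_cast; ring))

lemma comm_main17 {A : Type*} [CStarAlgebra A] (θ : ℝ) (u v : unitary A)
    (hcomm : (v : A) * (u : A) = e2πi θ • ((u : A) * (v : A))) (m n : ℤ) :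
    ((v ^ m : unitary A) : A) * ((u ^ n : unitary A) : A)
      = e2πi (m * n * θ) • (((u ^ n : unitary A) : A) * ((v ^ m : unitary A) : A)) := by
  have h1 : (v : A) * ((u ^ n : unitary A) : A)
      = e2πi (n * θ) • (((u ^ n : unitary A) : A) * (v : A)) :=
    mul_zpow_comm17 (v : A) u θ hcomm n
  have h2 : ((u ^ n : unitary A) : A) * (v : A)
      = e2πi (-(n * θ)) • ((v : A) * ((u ^ n : unitary A) : A)) :=
    smul_flip17 h1
  have h3 := mul_zpow_comm17 ((u ^ n : unitary A) : A) v (-(n * θ)) h2 m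
  have h4 := smul_flip17 h3
  rw [h4]
  exact congrArg (fun c => c • _) (e2πi_congr (by push_cast; ring))

lemma star_w17 {A : Type*} [CStarAlgebra A] (u v : unitary A) (k l : ℤ) :
    star ((u ^ k * v ^ l : unitary A) : A) = ((v ^ (-l) * u ^ (-k) : unitary A) : A) := by
  rw [← Unitary.coe_star, Unitary.star_eq_inv, mul_inv_rev, ← zpow_neg, ← zpow_neg]

lemma conj_u_pow17 {A : Type*} [CStarAlgebra A] (θ : ℝ) (u v : unitary A)
    (hcomm : (v : A) * (u : A) = e2πi θ • ((u : A) * (v : A))) (k l n : ℤ) :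
    ((u ^ k * v ^ l : unitary A) : A) * ((u ^ n : unitary A) : A)
        * star ((u ^ k * v ^ l : unitary A) : A)
      = e2πi (l * n * θ) • ((u ^ n : unitary A) : A) := by
  have hmid : ((v ^ l : unitary A) : A) * ((u ^ n : unitary A) : A) * ((v ^ (-l) : unitary A) : A)
      = e2πi (l * n * θ) • ((u ^ n : unitary A) : A) := by
    have hv : (v ^ l * v ^ (-l) : unitary A) = 1 := by group
    rw [comm_main17 θ u v hcomm l n, smul_mul_assoc,
      mul_assoc ((u ^ n : unitary A) : A), ← MulMemClass.coe_mul, hv,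
      OneMemClass.coe_one, mul_one]
  calc ((u ^ k * v ^ l : unitary A) : A) * ((u ^ n : unitary A) : A)
        * star ((u ^ k * v ^ l : unitary A) : A)
      = ((u ^ k : unitary A) : A)
          * (((v ^ l : unitary A) : A) * ((u ^ n : unitary A) : A) * ((v ^ (-l) : unitary A) : A))
          * ((u ^ (-k) : unitary A) : A) := by
        rw [star_w17]; simp only [MulMemClass.coe_mul, mul_assoc]
    _ = e2πi (l * n * θ) • (((u ^ k : unitary A) : A) * ((u ^ n : unitary A) : A)
          * ((u ^ (-k) : unitary A) : A)) := by
        rw [hmid]; simp only [mul_smul_comm, smul_mul_assoc, mul_assoc]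
    _ = e2πi (l * n * θ) • ((u ^ n : unitary A) : A) := by
        rw [← MulMemClass.coe_mul, ← MulMemClass.coe_mul]
        exact congrArg (fun z : unitary A => e2πi (l * n * θ) • (z : A))
          (show u ^ k * u ^ n * u ^ (-k) = u ^ n by group)

lemma conj_v17 {A : Type*} [CStarAlgebra A] (θ : ℝ) (u v : unitary A)
    (hcomm : (v : A) * (u : A) = e2πi θ • ((u : A) * (v : A))) (k l : ℤ) :
    ((u ^ k * v ^ l : unitary A) : A) * (v : A)
        * star ((u ^ k * v ^ l : unitary A) : A)
      = e2πi (-(k * θ)) • (v : A) := by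
  have h1 : (v : A) * ((u ^ (-k) : unitary A) : A)
      = e2πi (-k * θ) • (((u ^ (-k) : unitary A) : A) * (v : A)) := by
    have := mul_zpow_comm17 (v : A) u θ hcomm (-k)
    rwa [show ((-k : ℤ) : ℝ) = -(k : ℝ) by push_cast; ring] at this
  calc ((u ^ k * v ^ l : unitary A) : A) * (v : A)
        * star ((u ^ k * v ^ l : unitary A) : A)
      = ((u ^ k : unitary A) : A)
          * ((((v ^ l : unitary A) : A) * (v : A) * ((v ^ (-l) : unitary A) : A))
            * ((u ^ (-k) : unitary A) : A)) := by
        rw [star_w17]; simp only [MulMemClass.coe_mul, mul_assoc]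
    _ = ((u ^ k : unitary A) : A) * ((v : A) * ((u ^ (-k) : unitary A) : A)) := by
        rw [← MulMemClass.coe_mul, ← MulMemClass.coe_mul,
          show v ^ l * v * v ^ (-l) = v by group]
    _ = e2πi (-(k * θ)) • (v : A) := by
        rw [h1, mul_smul_comm, ← mul_assoc, ← MulMemClass.coe_mul,
          show u ^ k * u ^ (-k) = (1 : unitary A) by group, OneMemClass.coe_one, one_mul]
        exact congrArg (fun c => c • _) (e2πi_congr (by push_cast; ring))

/-- Conjugation by a unitary as a star algebra homomorphism. -/
noncomputable def conjSAH17 {A : Type*} [CStarAlgebra A] (w : unitary A) : A →⋆ₐ[ℂ] A where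
  toFun x := (w : A) * x * star (w : A)
  map_one' := by
    show (w : A) * 1 * star (w : A) = 1
    rw [mul_one]; exact Unitary.mul_star_self_of_mem w.prop
  map_mul' x y := by
    have hc : ∀ z : A, star (w : A) * ((w : A) * z) = z := fun z => by
      rw [← mul_assoc, Unitary.coe_star_mul_self, one_mul]
    simp only [mul_assoc, hc]
  map_zero' := by simp
  map_add' x y := by
    show (w : A) * (x + y) * star (w : A) = _
    rw [mul_add, add_mul]
  commutes' r := by
    show (w : A) * (algebraMap ℂ A) r * star (w : A) = _
    simp only [Algebra.algebraMap_eq_smul_one, mul_smul_comm, smul_mul_assoc, mul_one]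
    rw [Unitary.mul_star_self_of_mem w.prop]
  map_star' x := by simp only [star_mul, star_star, mul_assoc]

lemma conjSAH17_apply {A : Type*} [CStarAlgebra A] (w : unitary A) (x : A) :
    conjSAH17 w x = (w : A) * x * star (w : A) := rfl

lemma conjSAH17_continuous {A : Type*} [CStarAlgebra A] (w : unitary A) :
    Continuous (conjSAH17 w) := by
  show Continuous fun x : A => (w : A) * x * star (w : A)
  fun_prop

lemma split17 {A : Type*} [CStarAlgebra A] (w : unitary A) (a b c : A) :
    (w : A) * (a * b * c) * star (w : A)
      = ((w : A) * a * star (w : A)) * ((w : A) * b * star (w : A))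
        * ((w : A) * c * star (w : A)) := by
  have hc : ∀ z : A, star (w : A) * ((w : A) * z) = z := fun z => by
    rw [← mul_assoc, Unitary.coe_star_mul_self, one_mul]
  simp only [mul_assoc, hc]


/-- Let `A` be a unital C*-algebra, `θ, γ ∈ ℝ`, `d, k, l ∈ ℤ`, and let
`u, v ∈ A` be unitaries with `v u = e^{2πiθ} u v`.  Let `f : ℂ → ℝ` be continuous, and set
`g z = f (e^{2πilθ} z) + (l d − k) θ`.  Then, with `w = u^k v^l`:
(1) `w (e^{2πiγ} u) w* = e^{2πi(γ + lθ)} u`, and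
(2) `w (exp(2πi f(u)) u^d v) w* = exp(2πi g(u)) u^d v`,
where `exp(2πi φ(u))` is obtained by the continuous functional calculus of the normal
element `u` applied to `z ↦ e^{2πi φ(z)}`.  On generators, this says
`Ad(u^k v^l) ∘ α_{θ,γ,d,f} = α_{θ,γ+lθ,d,g}`. -/
theorem ad_unitary_conjugate_furstenberg
    {A : Type*} [CStarAlgebra A] (θ γ : ℝ) (d k l : ℤ)
    (u v : unitary A)
    (hcomm : (v : A) * (u : A) = e2πi θ • ((u : A) * (v : A)))
    (f : ℂ → ℝ) (hf : Continuous f)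
    (g : ℂ → ℝ) (hg : ∀ z : ℂ, g z = f (e2πi (l * θ) * z) + (l * d - k) * θ) :
    (((u ^ k * v ^ l : unitary A) : A)) * (e2πi γ • (u : A)) *
        star ((u ^ k * v ^ l : unitary A) : A)
      = e2πi (γ + l * θ) • (u : A) ∧
    ((u ^ k * v ^ l : unitary A) : A) *
        (cfc (fun z : ℂ => e2πi (f z)) (u : A) * ((u ^ d : unitary A) : A) * (v : A)) *
        star ((u ^ k * v ^ l : unitary A) : A)
      = cfc (fun z : ℂ => e2πi (g z)) (u : A) * ((u ^ d : unitary A) : A) * (v : A) := by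
  have hu1 : ((u ^ k * v ^ l : unitary A) : A) * (u : A)
      * star ((u ^ k * v ^ l : unitary A) : A) = e2πi (l * θ) • (u : A) := by
    have h := conj_u_pow17 θ u v hcomm k l 1
    rw [zpow_one] at h
    rw [h]
    exact congrArg (fun c => c • _) (e2πi_congr (by push_cast; ring))
  constructor
  · rw [mul_smul_comm, smul_mul_assoc, hu1, smul_smul, ← e2πi_add]
  · set F : ℂ → ℂ := fun z => e2πi (f z) with hFdef
    have hFc : Continuous F := e2πi_continuous f hf
    have hF'c : Continuous fun z : ℂ => F (e2πi (l * θ) * z) :=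
      hFc.comp (continuous_const.mul continuous_id)
    -- conjugation of the cfc element
    have hconj : ((u ^ k * v ^ l : unitary A) : A) * cfc F (u : A)
        * star ((u ^ k * v ^ l : unitary A) : A)
        = cfc (fun z : ℂ => F (e2πi (l * θ) * z)) (u : A) := by
      have hmap := StarAlgHom.map_cfc (S := ℂ) (conjSAH17 (u ^ k * v ^ l)) F (u : A)
        hFc.continuousOn (conjSAH17_continuous _)
      rw [conjSAH17_apply, conjSAH17_apply, hu1] at hmap
      rw [hmap, ← cfc_comp_const_mul (e2πi (l * θ)) F (u : A) hFc.continuousOn]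
    -- rewriting the target function
    have hG : cfc (fun z : ℂ => e2πi (g z)) (u : A)
        = e2πi ((l * d - k) * θ) • cfc (fun z : ℂ => F (e2πi (l * θ) * z)) (u : A) := by
      rw [← cfc_const_mul (e2πi ((l * d - k) * θ)) _ (u : A) hF'c.continuousOn]
      exact cfc_congr fun z _ => by rw [hg z, e2πi_add, mul_comm]
    rw [split17, hconj, conj_u_pow17 θ u v hcomm k l d, conj_v17 θ u v hcomm k l, hG]
    simp only [mul_smul_comm, smul_mul_assoc, smul_smul, ← e2πi_add]
    exact congrArg (fun c => c • _) (e2πi_congr (by push_cast; ring))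
end
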